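/- arXiv:2502.10761 — 2 statements merged into one kernel-verified Lean document; each statement's English description precedes it below -/
import Mathlib

section
/- (Theorem 1) Let k, m ≥ 1, ω₀ > 0, let A = M ⊗ I_k where M is the real 3×3 matrix with rows (−3, 1, 0), (−3, 0, 1), (−1, 0, 0), let P ∈ ℝ^{3k×3k} be symmetric positive definite with Aᵀ P + P A = −I_{3k}, and let Γ ∈ ℝ^{m×m} be symmetric positive definite. Let B : [0, ∞) → ℝ^{3k×m} be continuous with supₜ ‖B(t)‖ < ∞ (operator norm). Suppose η : [0, ∞) → ℝ^{3k} and θ̃ : [0, ∞) → ℝ^m are differentiable and satisfy, for all t ≥ 0, η̇(t) = ω₀ A η(t) + (1/ω₀) B(t) θ̃(t) and θ̃̇(t) = −(1/ω₀) Γ B(t)ᵀ P η(t). Then η(t) → 0 as t → ∞. -/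
open Matrix Filter
open scoped Kronecker

/-- The ESO error-dynamics system matrix (before Kronecker lifting). -/
noncomputable def M : Matrix (Fin 3) (Fin 3) ℝ :=
  !![-3, 1, 0; -3, 0, 1; -1, 0, 0]

/-- Euclidean norm of a finitely-indexed real vector. -/
noncomputable def eucNorm {n : Type*} [Fintype n] (v : n → ℝ) : ℝ :=
  ‖(EuclideanSpace.equiv n ℝ).symm v‖

/-- Operator norm (Euclidean → Euclidean) of a real matrix. -/
noncomputable def opNorm {m n : Type*} [Fintype m] [Fintype n] [DecidableEq n]
    (A : Matrix m n ℝ) : ℝ :=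
  ‖LinearMap.toContinuousLinearMap (Matrix.toEuclideanLin A)‖

section helpers

variable {n p : Type*} [Fintype n] [Fintype p]

lemma dot_trans (A : Matrix n p ℝ) (x : n → ℝ) (y : p → ℝ) :
    (x ⬝ᵥ (A *ᵥ y)) = (Aᵀ *ᵥ x) ⬝ᵥ y := by
  rw [Matrix.dotProduct_mulVec, ← Matrix.mulVec_transpose]

lemma mulVec_dot (A : Matrix n p ℝ) (x : n → ℝ) (y : p → ℝ) :
    (A *ᵥ y) ⬝ᵥ x = y ⬝ᵥ (Aᵀ *ᵥ x) := by
  rw [dotProduct_comm, dot_trans, dotProduct_comm]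

lemma hasDerivAt_dot {f g : ℝ → n → ℝ} {f' g' : n → ℝ} {t : ℝ}
    (hf : HasDerivAt f f' t) (hg : HasDerivAt g g' t) :
    HasDerivAt (fun s => f s ⬝ᵥ g s) (f' ⬝ᵥ g t + f t ⬝ᵥ g') t := by
  have h : ∀ i : n, HasDerivAt (fun s => f s i * g s i) (f' i * g t i + f t i * g' i) t :=
    fun i => ((hasDerivAt_pi.1 hf i).mul (hasDerivAt_pi.1 hg i))
  have := HasDerivAt.fun_sum (u := Finset.univ) (fun i _ => h i)
  simpa [dotProduct, Finset.sum_add_distrib] using this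

lemma hasDerivAt_mulVec (Q : Matrix p n ℝ) {f : ℝ → n → ℝ} {f' : n → ℝ} {t : ℝ}
    (hf : HasDerivAt f f' t) :
    HasDerivAt (fun s => Q *ᵥ f s) (Q *ᵥ f') t := by
  rw [hasDerivAt_pi]
  intro i
  have h : ∀ j : n, HasDerivAt (fun s => Q i j * f s j) (Q i j * f' j) t :=
    fun j => (hasDerivAt_pi.1 hf j).const_mul _
  have := HasDerivAt.fun_sum (u := Finset.univ) (fun j _ => h j)
  simpa [Matrix.mulVec, dotProduct] using this

lemma dot_eq_inner (x y : n → ℝ) :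
    x ⬝ᵥ y = inner ℝ ((WithLp.equiv 2 (n → ℝ)).symm x) ((WithLp.equiv 2 (n → ℝ)).symm y) := by
  simp [PiLp.inner_apply, dotProduct, RCLike.inner_apply, mul_comm]

lemma dot_self_eq_normsq (x : n → ℝ) :
    x ⬝ᵥ x = ‖(WithLp.equiv 2 (n → ℝ)).symm x‖ ^ 2 := by
  rw [dot_eq_inner, ← real_inner_self_eq_norm_sq]

lemma dot_self_nonneg (x : n → ℝ) : 0 ≤ x ⬝ᵥ x := by
  rw [dot_self_eq_normsq]; positivity

lemma eucNorm_eq_withlp (v : n → ℝ) :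
    eucNorm v = ‖(WithLp.equiv 2 (n → ℝ)).symm v‖ := rfl

lemma eucNorm_eq_sqrt (v : n → ℝ) : eucNorm v = Real.sqrt (v ⬝ᵥ v) := by
  rw [eucNorm_eq_withlp, dot_self_eq_normsq, Real.sqrt_sq (norm_nonneg _)]

lemma eucNorm_add_le (x y : n → ℝ) : eucNorm (x + y) ≤ eucNorm x + eucNorm y := by
  have h : (WithLp.equiv 2 (n → ℝ)).symm (x + y) =
      (WithLp.equiv 2 (n → ℝ)).symm x + (WithLp.equiv 2 (n → ℝ)).symm y := rfl
  rw [eucNorm_eq_withlp, h]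
  exact norm_add_le _ _

lemma eucNorm_smul (c : ℝ) (x : n → ℝ) : eucNorm (c • x) = |c| * eucNorm x := by
  have h : (WithLp.equiv 2 (n → ℝ)).symm (c • x) =
      c • (WithLp.equiv 2 (n → ℝ)).symm x := rfl
  rw [eucNorm_eq_withlp, h, norm_smul, Real.norm_eq_abs, eucNorm_eq_withlp]

lemma abs_dot_le (x y : n → ℝ) :
    |x ⬝ᵥ y| ≤ eucNorm x * eucNorm y := by
  rw [dot_eq_inner, eucNorm_eq_withlp, eucNorm_eq_withlp]
  exact abs_real_inner_le_norm _ _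

lemma opNorm_mulVec [DecidableEq n] (A : Matrix p n ℝ) (x : n → ℝ) :
    eucNorm (A *ᵥ x) ≤ opNorm A * eucNorm x := by
  have h := (LinearMap.toContinuousLinearMap (Matrix.toEuclideanLin A)).le_opNorm
    ((WithLp.equiv 2 (n → ℝ)).symm x)
  have he : (LinearMap.toContinuousLinearMap (Matrix.toEuclideanLin A))
      ((WithLp.equiv 2 (n → ℝ)).symm x) = (WithLp.equiv 2 (p → ℝ)).symm (A *ᵥ x) := by
    simp [LinearMap.coe_toContinuousLinearMap']
  rw [he] at h
  exact h

lemma posdef_lb [DecidableEq n] [Nonempty n]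
    {Q : Matrix n n ℝ} (hQ : Q.PosDef) :
    ∃ c > (0:ℝ), ∀ x : n → ℝ, c * (x ⬝ᵥ x) ≤ x ⬝ᵥ (Q *ᵥ x) := by
  classical
  set f : EuclideanSpace ℝ n → ℝ :=
    fun x => (WithLp.equiv 2 (n → ℝ) x) ⬝ᵥ (Q *ᵥ (WithLp.equiv 2 (n → ℝ) x)) with hf
  have h1 : Continuous fun x : EuclideanSpace ℝ n => (WithLp.equiv 2 (n → ℝ)) x :=
    PiLp.continuous_ofLp 2 (fun _ : n => ℝ)
  have hcont : Continuous f := by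
    have hfe : f = fun x => ∑ i, (WithLp.equiv 2 (n → ℝ) x i) *
        ∑ j, Q i j * (WithLp.equiv 2 (n → ℝ) x j) := by
      funext x; simp [hf, dotProduct, Matrix.mulVec]
    rw [hfe]
    exact continuous_finset_sum _ fun i _ =>
      (((continuous_apply i).comp h1).mul (continuous_finset_sum _ fun j _ =>
        continuous_const.mul ((continuous_apply j).comp h1)))
  have hsph : IsCompact (Metric.sphere (0 : EuclideanSpace ℝ n) 1) := isCompact_sphere _ _
  obtain ⟨i0⟩ := ‹Nonempty n›
  have hne : (Metric.sphere (0 : EuclideanSpace ℝ n) 1).Nonempty :=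
    ⟨EuclideanSpace.single i0 1, by simp [EuclideanSpace.norm_single]⟩
  obtain ⟨x0, hx0mem, hx0min⟩ := hsph.exists_isMinOn hne (hcont.continuousOn)
  set c := f x0 with hc
  have hx0ne : (WithLp.equiv 2 (n → ℝ)) x0 ≠ 0 := by
    intro h
    have : x0 = 0 := by
      apply (WithLp.equiv 2 (n → ℝ)).injective
      simpa using h
    rw [this] at hx0mem
    simp at hx0mem
  have hcpos : 0 < c := by
    have := hQ.dotProduct_mulVec_pos hx0ne
    simpa [hc, hf] using this
  refine ⟨c, hcpos, fun x => ?_⟩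
  by_cases hx : x = 0
  · simp [hx]
  · set y : EuclideanSpace ℝ n := (WithLp.equiv 2 (n → ℝ)).symm x with hy
    have hyne : y ≠ 0 := by
      simp only [hy, ne_eq, EmbeddingLike.map_eq_zero_iff]
      intro h; apply hx; simpa using congrArg (WithLp.equiv 2 (n → ℝ)) h
    have hynorm : ‖y‖ ≠ 0 := norm_ne_zero_iff.2 hyne
    have hmem : ‖y‖⁻¹ • y ∈ Metric.sphere (0 : EuclideanSpace ℝ n) 1 := by
      simp [norm_smul, abs_of_nonneg (inv_nonneg.2 (norm_nonneg y)), inv_mul_cancel₀ hynorm]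
    have hmin := hx0min hmem
    have hsc : f (‖y‖⁻¹ • y) = (‖y‖⁻¹)^2 * f y := by
      simp only [hf]
      have : (WithLp.equiv 2 (n → ℝ)) (‖y‖⁻¹ • y) = ‖y‖⁻¹ • ((WithLp.equiv 2 (n → ℝ)) y) := rfl
      rw [this, Matrix.mulVec_smul, smul_dotProduct, dotProduct_smul]
      ring_nf
    have hfy : (WithLp.equiv 2 (n → ℝ)) y = x := by simp [hy]
    have h2 : c ≤ (‖y‖⁻¹)^2 * (x ⬝ᵥ (Q *ᵥ x)) := by
      rw [← hfy]
      calc c ≤ f (‖y‖⁻¹ • y) := hmin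
      _ = (‖y‖⁻¹)^2 * f y := hsc
    have hnorm2 : ‖y‖^2 = x ⬝ᵥ x := by
      rw [dot_self_eq_normsq, hy]
    have hpos2 : (0:ℝ) < ‖y‖^2 := by positivity
    calc c * (x ⬝ᵥ x) = c * ‖y‖^2 := by rw [hnorm2]
    _ ≤ ((‖y‖⁻¹)^2 * (x ⬝ᵥ (Q *ᵥ x))) * ‖y‖^2 := by
        apply mul_le_mul_of_nonneg_right h2 (le_of_lt hpos2)
    _ = x ⬝ᵥ (Q *ᵥ x) := by field_simp

lemma Vd_eq {nn mm : Type*} [Fintype nn] [Fintype mm] [DecidableEq nn] [DecidableEq mm]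
    (A P : Matrix nn nn ℝ) (Γ : Matrix mm mm ℝ) (Bt : Matrix nn mm ℝ)
    (hPsymm : Pᵀ = P) (hΓsymm : Γᵀ = Γ) (hΓu : IsUnit Γ.det)
    (hlyap : Aᵀ * P + P * A = -1) (ω₀ : ℝ)
    (u : nn → ℝ) (v : mm → ℝ) :
    (ω₀ • (A *ᵥ u) + (1/ω₀) • (Bt *ᵥ v)) ⬝ᵥ (P *ᵥ u)
      + u ⬝ᵥ (P *ᵥ (ω₀ • (A *ᵥ u) + (1/ω₀) • (Bt *ᵥ v)))
      + (-((1/ω₀) • (Γ *ᵥ (Btᵀ *ᵥ (P *ᵥ u))))) ⬝ᵥ (Γ⁻¹ *ᵥ v)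
      + v ⬝ᵥ (Γ⁻¹ *ᵥ (-((1/ω₀) • (Γ *ᵥ (Btᵀ *ᵥ (P *ᵥ u)))))) = -(ω₀ * (u ⬝ᵥ u)) := by
  have key1 : (A *ᵥ u) ⬝ᵥ (P *ᵥ u) + u ⬝ᵥ (P *ᵥ (A *ᵥ u)) = -(u ⬝ᵥ u) := by
    rw [mulVec_dot A (P *ᵥ u) u, Matrix.mulVec_mulVec, Matrix.mulVec_mulVec,
      ← dotProduct_add, ← Matrix.add_mulVec, hlyap, Matrix.neg_mulVec,
      Matrix.one_mulVec, dotProduct_neg]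
  have key2 : (Bt *ᵥ v) ⬝ᵥ (P *ᵥ u) = v ⬝ᵥ (Btᵀ *ᵥ (P *ᵥ u)) :=
    mulVec_dot Bt (P *ᵥ u) v
  have key3 : u ⬝ᵥ (P *ᵥ (Bt *ᵥ v)) = v ⬝ᵥ (Btᵀ *ᵥ (P *ᵥ u)) := by
    rw [dot_trans P u (Bt *ᵥ v), hPsymm, dotProduct_comm, key2]
  have key4 : (Γ *ᵥ (Btᵀ *ᵥ (P *ᵥ u))) ⬝ᵥ (Γ⁻¹ *ᵥ v) = v ⬝ᵥ (Btᵀ *ᵥ (P *ᵥ u)) := by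
    rw [mulVec_dot Γ (Γ⁻¹ *ᵥ v) (Btᵀ *ᵥ (P *ᵥ u)), hΓsymm, Matrix.mulVec_mulVec,
      Matrix.mulVec_mulVec, Matrix.mul_nonsing_inv _ hΓu, Matrix.one_mulVec, dotProduct_comm]
  have key5 : v ⬝ᵥ (Γ⁻¹ *ᵥ (Γ *ᵥ (Btᵀ *ᵥ (P *ᵥ u)))) = v ⬝ᵥ (Btᵀ *ᵥ (P *ᵥ u)) := by
    rw [Matrix.mulVec_mulVec, Matrix.nonsing_inv_mul _ hΓu, Matrix.one_mulVec]
  simp only [add_dotProduct, dotProduct_add, Matrix.mulVec_add,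
    smul_dotProduct, dotProduct_smul, Matrix.mulVec_smul,
    neg_dotProduct, dotProduct_neg, Matrix.mulVec_neg, smul_eq_mul]
  linear_combination ω₀ * key1 + (1/ω₀) * key2 + (1/ω₀) * key3
    - (1/ω₀) * key4 - (1/ω₀) * key5

lemma barbalat (g : ℝ → ℝ) (hg0 : ∀ t ≥ (0:ℝ), 0 ≤ g t)
    (hgc : ContinuousOn g (Set.Ici 0))
    (L : ℝ) (hL : 0 < L)
    (hlip : ∀ s ∈ Set.Ici (0:ℝ), ∀ t ∈ Set.Ici (0:ℝ), |g t - g s| ≤ L * |t - s|)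
    (Cb : ℝ) (hint : ∀ T ≥ (0:ℝ), (∫ t in (0:ℝ)..T, g t) ≤ Cb) :
    Tendsto g atTop (nhds 0) := by
  classical
  set F : ℝ → ℝ := fun T => ∫ t in (0:ℝ)..(max T 0), g t with hF
  have hgint : ∀ a ∈ Set.Ici (0:ℝ), ∀ b ∈ Set.Ici (0:ℝ),
      IntervalIntegrable g MeasureTheory.volume a b := by
    intro a ha b hb
    apply ContinuousOn.intervalIntegrable
    apply hgc.mono
    intro x hx
    rcases Set.mem_uIcc.mp hx with ⟨h1, _⟩ | ⟨h1, _⟩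
    · exact le_trans ha h1
    · exact le_trans hb h1
  have hFdiff : ∀ a ∈ Set.Ici (0:ℝ), ∀ b ∈ Set.Ici (0:ℝ),
      (∫ t in (0:ℝ)..a, g t) + (∫ t in a..b, g t) = ∫ t in (0:ℝ)..b, g t :=
    fun a ha b hb => intervalIntegral.integral_add_adjacent_intervals
      (hgint 0 Set.self_mem_Ici a ha) (hgint a ha b hb)
  have hFmono : Monotone F := by
    intro a b hab
    have ha' : max a 0 ∈ Set.Ici (0:ℝ) := Set.mem_Ici.mpr (le_max_right _ _)
    have hb' : max b 0 ∈ Set.Ici (0:ℝ) := Set.mem_Ici.mpr (le_max_right _ _)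
    have hab' : max a 0 ≤ max b 0 := max_le_max hab le_rfl
    have hnn : 0 ≤ ∫ t in (max a 0)..(max b 0), g t := by
      apply intervalIntegral.integral_nonneg hab'
      intro u hu
      exact hg0 u (le_trans ha' hu.1)
    have := hFdiff _ ha' _ hb'
    simp only [hF]
    linarith
  have hFbdd : BddAbove (Set.range F) := by
    refine ⟨Cb, ?_⟩
    rintro _ ⟨T, rfl⟩
    exact hint _ (le_max_right _ _)
  have hconv : Tendsto F atTop (nhds (⨆ T, F T)) := tendsto_atTop_ciSup hFmono hFbdd
  rw [Metric.tendsto_atTop]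
  intro ε hε
  set δ : ℝ := ε / (2 * L) with hδ
  have hδpos : 0 < δ := by positivity
  have hLδ : L * δ = ε / 2 := by rw [hδ, mul_div_assoc', div_eq_div_iff (by positivity) two_ne_zero]; ring
  have hdiff0 : Tendsto (fun t => F (t + δ) - F t) atTop (nhds 0) := by
    have h1 : Tendsto (fun t => F (t + δ)) atTop (nhds (⨆ T, F T)) :=
      hconv.comp (tendsto_atTop_add_const_right _ δ tendsto_id)
    simpa using h1.sub hconv
  obtain ⟨T₀, hT₀⟩ := (Metric.tendsto_atTop.mp hdiff0) (ε * δ / 2) (by positivity)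
  refine ⟨max T₀ 0, fun t ht => ?_⟩
  have ht0 : (0:ℝ) ≤ t := le_trans (le_max_right _ _) ht
  have htT : T₀ ≤ t := le_trans (le_max_left _ _) ht
  have hgt0 : 0 ≤ g t := hg0 t ht0
  rw [Real.dist_eq, sub_zero, abs_of_nonneg hgt0]
  by_contra hcon
  push_neg at hcon
  have hbound : ∀ s ∈ Set.Icc t (t + δ), ε / 2 ≤ g s := by
    intro s hs
    have hs0 : (0:ℝ) ≤ s := le_trans ht0 hs.1
    have := hlip t ht0 s hs0
    have habs : |s - t| ≤ δ := by
      rw [abs_of_nonneg (by linarith [hs.1])]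
      linarith [hs.2]
    have h2 : |g s - g t| ≤ L * δ := le_trans this (by
      apply mul_le_mul_of_nonneg_left habs (le_of_lt hL))
    have h3 : g t - g s ≤ ε / 2 := by
      rw [hLδ] at h2
      have := abs_le.mp h2
      linarith [this.1]
    linarith
  have hintlb : ε / 2 * δ ≤ ∫ s in t..(t + δ), g s := by
    have hconst : (∫ _ in t..(t + δ), (ε/2 : ℝ)) = ε / 2 * δ := by
      simp [intervalIntegral.integral_const]
      ring
    rw [← hconst]
    apply intervalIntegral.integral_mono_on (by linarith)
      intervalIntegrable_const
      (hgint t ht0 (t + δ) (by simp; linarith))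
    intro s hs
    exact hbound s hs
  have hFt : F (t + δ) - F t = ∫ s in t..(t + δ), g s := by
    have h1 := hFdiff t ht0 (t + δ) (by simp; linarith)
    simp only [hF]
    rw [max_eq_left ht0, max_eq_left (by linarith : (0:ℝ) ≤ t + δ)]
    linarith
  have := hT₀ t htT
  rw [Real.dist_eq, sub_zero] at this
  have h4 : F (t + δ) - F t < ε * δ / 2 := lt_of_abs_lt this
  rw [hFt] at h4
  linarith [hintlb]

end helpers

/-- Theorem 1: for the adaptive ESO error dynamics `η̇ = ω₀Aη + (1/ω₀)Bθ̃` with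
`A = M ⊗ I_k`, Lyapunov matrix `P` with `AᵀP + PA = -I`, adaptation law
`θ̃̇ = -(1/ω₀)ΓBᵀPη`, and `B` continuous and bounded, the scaled estimation error `η`
converges to zero. -/
theorem stmt8 (k m : ℕ) (hk : 1 ≤ k) (hm : 1 ≤ m) (ω₀ : ℝ) (hω : 0 < ω₀)
    (P : Matrix (Fin 3 × Fin k) (Fin 3 × Fin k) ℝ) (hP : P.PosDef) (hPsymm : Pᵀ = P)
    (hlyap : (M ⊗ₖ (1 : Matrix (Fin k) (Fin k) ℝ))ᵀ * P +
      P * (M ⊗ₖ (1 : Matrix (Fin k) (Fin k) ℝ)) = -1)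
    (Γ : Matrix (Fin m) (Fin m) ℝ) (hΓ : Γ.PosDef) (hΓsymm : Γᵀ = Γ)
    (B : ℝ → Matrix (Fin 3 × Fin k) (Fin m) ℝ)
    (hBc : ∀ i j, Continuous fun t => B t i j)
    (hBb : ∃ C : ℝ, ∀ t ≥ (0 : ℝ), opNorm (B t) ≤ C)
    (η : ℝ → Fin 3 × Fin k → ℝ) (θt : ℝ → Fin m → ℝ)
    (hη : ∀ t ≥ (0 : ℝ),
      HasDerivAt η (ω₀ • ((M ⊗ₖ (1 : Matrix (Fin k) (Fin k) ℝ)) *ᵥ η t) +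
        (1 / ω₀) • (B t *ᵥ θt t)) t)
    (hθ : ∀ t ≥ (0 : ℝ),
      HasDerivAt θt (-((1 / ω₀) • (Γ *ᵥ ((B t)ᵀ *ᵥ (P *ᵥ η t))))) t) :
    Tendsto η atTop (nhds 0) := by
  classical
  haveI hkne : Nonempty (Fin k) := ⟨⟨0, hk⟩⟩
  haveI hmne : Nonempty (Fin m) := ⟨⟨0, hm⟩⟩
  haveI hnne : Nonempty (Fin 3 × Fin k) := inferInstance
  set A : Matrix (Fin 3 × Fin k) (Fin 3 × Fin k) ℝ := M ⊗ₖ (1 : Matrix (Fin k) (Fin k) ℝ)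
    with hA
  obtain ⟨C, hC⟩ := hBb
  have hC0 : (0:ℝ) ≤ C := le_trans (norm_nonneg _) (hC 0 le_rfl)
  obtain ⟨cP, hcP, hPlb⟩ := posdef_lb hP
  have hΓinv : (Γ⁻¹).PosDef := hΓ.inv
  obtain ⟨cG, hcG, hGlb⟩ := posdef_lb hΓinv
  have hΓu : IsUnit Γ.det := isUnit_iff_ne_zero.2 (ne_of_gt hΓ.det_pos)
  set g : ℝ → ℝ := fun t => η t ⬝ᵥ η t with hg
  set V : ℝ → ℝ := fun t => η t ⬝ᵥ (P *ᵥ η t) + θt t ⬝ᵥ (Γ⁻¹ *ᵥ θt t) with hV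
  -- derivative of V
  have hVd : ∀ t ≥ (0:ℝ), HasDerivAt V (-(ω₀ * g t)) t := by
    intro t ht
    have h1 := hasDerivAt_dot (hη t ht) (hasDerivAt_mulVec P (hη t ht))
    have h2 := hasDerivAt_dot (hθ t ht) (hasDerivAt_mulVec Γ⁻¹ (hθ t ht))
    have h3 := h1.add h2
    have heq := Vd_eq A P Γ (B t) hPsymm hΓsymm hΓu hlyap ω₀ (η t) (θt t)
    refine h3.congr_deriv ?_
    rw [show -(ω₀ * g t) = -(ω₀ * (η t ⬝ᵥ η t)) from rfl, ← heq]
    ring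
  -- continuity
  have hηc : ContinuousOn η (Set.Ici 0) :=
    fun t ht => (hη t ht).continuousAt.continuousWithinAt
  have hθc : ContinuousOn θt (Set.Ici 0) :=
    fun t ht => (hθ t ht).continuousAt.continuousWithinAt
  have hgc : ContinuousOn g (Set.Ici 0) := by
    have : g = fun t => ∑ i, η t i * η t i := by
      funext t; simp [hg, dotProduct]
    rw [this]
    exact continuousOn_finset_sum _ fun i _ =>
      (((continuous_apply i).comp_continuousOn hηc).mul
        ((continuous_apply i).comp_continuousOn hηc))
  have hg0 : ∀ t, 0 ≤ g t := fun t => dot_self_nonneg (η t)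
  -- FTC
  have hftc : ∀ s ≥ (0:ℝ), ∀ t, s ≤ t →
      (∫ u in s..t, -(ω₀ * g u)) = V t - V s := by
    intro s hs t hst
    apply intervalIntegral.integral_eq_sub_of_hasDerivAt
    · intro u hu
      rw [Set.uIcc_of_le hst] at hu
      exact hVd u (le_trans hs hu.1)
    · apply ContinuousOn.intervalIntegrable
      apply (continuousOn_const.mul (hgc.mono ?_)).neg
      intro x hx
      rw [Set.uIcc_of_le hst] at hx
      exact le_trans hs hx.1
  -- V is nonnegative
  have hVnn : ∀ t, 0 ≤ V t := by
    intro t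
    have h1 := hP.posSemidef.dotProduct_mulVec_nonneg (η t)
    have h2 := hΓinv.posSemidef.dotProduct_mulVec_nonneg (θt t)
    simp only [star_trivial] at h1 h2
    simp only [hV]
    linarith
  -- V is bounded by V 0 and the integral bound
  have hIeq : ∀ T ≥ (0:ℝ), ω₀ * (∫ u in (0:ℝ)..T, g u) = V 0 - V T := by
    intro T hT
    have h1 := hftc 0 le_rfl T hT
    rw [intervalIntegral.integral_neg, intervalIntegral.integral_const_mul] at h1
    linarith
  have hInn : ∀ T ≥ (0:ℝ), 0 ≤ ∫ u in (0:ℝ)..T, g u := fun T hT =>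
    intervalIntegral.integral_nonneg hT (fun u _ => hg0 u)
  have hVle : ∀ t ≥ (0:ℝ), V t ≤ V 0 := by
    intro t ht
    have h1 := hIeq t ht
    have h2 := hInn t ht
    nlinarith
  have hIb : ∀ T ≥ (0:ℝ), (∫ t in (0:ℝ)..T, g t) ≤ V 0 / ω₀ := by
    intro T hT
    rw [le_div_iff₀ hω]
    have h1 := hIeq T hT
    have h4 := hVnn T
    nlinarith
  -- pointwise bounds
  have hgb : ∀ t ≥ (0:ℝ), g t ≤ V 0 / cP := by
    intro t ht
    have h1 := hPlb (η t)
    have h2 := hΓinv.posSemidef.dotProduct_mulVec_nonneg (θt t)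
    simp only [star_trivial] at h2
    have h3 := hVle t ht
    have h4 : V t = η t ⬝ᵥ (P *ᵥ η t) + θt t ⬝ᵥ (Γ⁻¹ *ᵥ θt t) := rfl
    have h5 : g t = η t ⬝ᵥ η t := rfl
    have h6 : cP * (η t ⬝ᵥ η t) ≤ V 0 := by
      simp only [hV] at h3 ⊢
      linarith
    rw [h5]
    rw [le_div_iff₀ hcP, mul_comm]
    exact h6
  have hθb : ∀ t ≥ (0:ℝ), θt t ⬝ᵥ θt t ≤ V 0 / cG := by
    intro t ht
    have h1 := hGlb (θt t)
    have h2 := hP.posSemidef.dotProduct_mulVec_nonneg (η t)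
    simp only [star_trivial] at h2
    have h3 := hVle t ht
    have h4 : V t = η t ⬝ᵥ (P *ᵥ η t) + θt t ⬝ᵥ (Γ⁻¹ *ᵥ θt t) := rfl
    have h6 : cG * (θt t ⬝ᵥ θt t) ≤ V 0 := by
      simp only [hV] at h3 ⊢
      linarith
    rw [le_div_iff₀ hcG, mul_comm]
    exact h6
  set Kη : ℝ := Real.sqrt (V 0 / cP) with hKηdef
  set Kθ : ℝ := Real.sqrt (V 0 / cG) with hKθdef
  have hKη0 : 0 ≤ Kη := Real.sqrt_nonneg _
  have hKθ0 : 0 ≤ Kθ := Real.sqrt_nonneg _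
  have hKη : ∀ t ≥ (0:ℝ), eucNorm (η t) ≤ Kη := by
    intro t ht
    rw [eucNorm_eq_sqrt]
    exact Real.sqrt_le_sqrt (hgb t ht)
  have hKθ : ∀ t ≥ (0:ℝ), eucNorm (θt t) ≤ Kθ := by
    intro t ht
    rw [eucNorm_eq_sqrt]
    exact Real.sqrt_le_sqrt (hθb t ht)
  have hopA : 0 ≤ opNorm A := norm_nonneg _
  set D : ℝ := ω₀ * opNorm A * Kη + (1/ω₀) * C * Kθ with hDdef
  have hD0 : 0 ≤ D := by
    apply add_nonneg
    · exact mul_nonneg (mul_nonneg hω.le hopA) hKη0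
    · exact mul_nonneg (mul_nonneg (by positivity) hC0) hKθ0
  have hD : ∀ t ≥ (0:ℝ), eucNorm (ω₀ • (A *ᵥ η t) + (1/ω₀) • (B t *ᵥ θt t)) ≤ D := by
    intro t ht
    calc eucNorm (ω₀ • (A *ᵥ η t) + (1/ω₀) • (B t *ᵥ θt t))
        ≤ eucNorm (ω₀ • (A *ᵥ η t)) + eucNorm ((1/ω₀) • (B t *ᵥ θt t)) :=
          eucNorm_add_le _ _
      _ = ω₀ * eucNorm (A *ᵥ η t) + (1/ω₀) * eucNorm (B t *ᵥ θt t) := by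
          rw [eucNorm_smul, eucNorm_smul, abs_of_pos hω, abs_of_pos (by positivity)]
      _ ≤ ω₀ * (opNorm A * eucNorm (η t)) + (1/ω₀) * (opNorm (B t) * eucNorm (θt t)) := by
          have ha := opNorm_mulVec A (η t)
          have hb := opNorm_mulVec (B t) (θt t)
          have h1 : (0:ℝ) ≤ 1/ω₀ := by positivity
          have e1 := mul_le_mul_of_nonneg_left ha hω.le
          have e2 := mul_le_mul_of_nonneg_left hb h1
          linarith
      _ ≤ ω₀ * (opNorm A * Kη) + (1/ω₀) * (C * Kθ) := by
          have hBn : 0 ≤ opNorm (B t) := norm_nonneg _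
          have hen : 0 ≤ eucNorm (θt t) := norm_nonneg _
          have h1 : (0:ℝ) ≤ 1/ω₀ := by positivity
          have h2 := hKη t ht
          have h3 := hKθ t ht
          have h4 := hC t ht
          have e1 : opNorm A * eucNorm (η t) ≤ opNorm A * Kη :=
            mul_le_mul_of_nonneg_left h2 hopA
          have e2 : opNorm (B t) * eucNorm (θt t) ≤ C * Kθ :=
            mul_le_mul h4 h3 hen hC0
          have e3 := mul_le_mul_of_nonneg_left e1 hω.le
          have e4 := mul_le_mul_of_nonneg_left e2 h1
          linarith
      _ = D := by rw [hDdef]; ring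
  -- Lipschitz constant for g
  set L : ℝ := 2 * Kη * D + 1 with hLdef
  have hL : 0 < L := by nlinarith [mul_nonneg hKη0 hD0]
  have hglip : ∀ s ∈ Set.Ici (0:ℝ), ∀ t ∈ Set.Ici (0:ℝ), |g t - g s| ≤ L * |t - s| := by
    intro s hs t ht
    have hder : ∀ u ∈ Set.Ici (0:ℝ), HasDerivWithinAt g
        ((ω₀ • (A *ᵥ η u) + (1/ω₀) • (B u *ᵥ θt u)) ⬝ᵥ η u
          + η u ⬝ᵥ (ω₀ • (A *ᵥ η u) + (1/ω₀) • (B u *ᵥ θt u))) (Set.Ici 0) u :=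
      fun u hu => (hasDerivAt_dot (hη u hu) (hη u hu)).hasDerivWithinAt
    have hbound : ∀ u ∈ Set.Ici (0:ℝ),
        ‖(ω₀ • (A *ᵥ η u) + (1/ω₀) • (B u *ᵥ θt u)) ⬝ᵥ η u
          + η u ⬝ᵥ (ω₀ • (A *ᵥ η u) + (1/ω₀) • (B u *ᵥ θt u))‖ ≤ L := by
      intro u hu
      have hw1 := hD u hu
      have hw2 := hKη u hu
      have h1 : |(ω₀ • (A *ᵥ η u) + (1/ω₀) • (B u *ᵥ θt u)) ⬝ᵥ η u| ≤ D * Kη :=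
        le_trans (abs_dot_le _ _) (mul_le_mul hw1 hw2 (norm_nonneg _) hD0)
      have h2 : |η u ⬝ᵥ (ω₀ • (A *ᵥ η u) + (1/ω₀) • (B u *ᵥ θt u))| ≤ Kη * D :=
        le_trans (abs_dot_le _ _) (mul_le_mul hw2 hw1 (norm_nonneg _) hKη0)
      rw [Real.norm_eq_abs]
      calc |(ω₀ • (A *ᵥ η u) + (1/ω₀) • (B u *ᵥ θt u)) ⬝ᵥ η u
          + η u ⬝ᵥ (ω₀ • (A *ᵥ η u) + (1/ω₀) • (B u *ᵥ θt u))|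
          ≤ |(ω₀ • (A *ᵥ η u) + (1/ω₀) • (B u *ᵥ θt u)) ⬝ᵥ η u|
            + |η u ⬝ᵥ (ω₀ • (A *ᵥ η u) + (1/ω₀) • (B u *ᵥ θt u))| := abs_add_le _ _
      _ ≤ D * Kη + Kη * D := add_le_add h1 h2
      _ ≤ L := by rw [hLdef]; nlinarith
    have := (convex_Ici (0:ℝ)).norm_image_sub_le_of_norm_hasDerivWithin_le
      hder hbound hs ht
    calc |g t - g s| = ‖g t - g s‖ := (Real.norm_eq_abs _).symm
    _ ≤ L * ‖t - s‖ := this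
    _ = L * |t - s| := by rw [Real.norm_eq_abs]
  -- Barbalat
  have hgto : Tendsto g atTop (nhds 0) :=
    barbalat g (fun t _ => hg0 t) hgc L hL hglip (V 0 / ω₀) hIb
  -- conclude
  rw [tendsto_pi_nhds]
  intro i
  simp only [Pi.zero_apply]
  have hsq : Tendsto (fun t => Real.sqrt (g t)) atTop (nhds 0) := by
    have h1 := (Real.continuous_sqrt.tendsto 0).comp hgto
    simpa [Function.comp_def, Real.sqrt_zero] using h1
  have hbd : ∀ t, |η t i| ≤ Real.sqrt (g t) := by
    intro t
    have h5 : (η t i)^2 ≤ g t := by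
      have h6 : g t = ∑ j, η t j * η t j := by simp [hg, dotProduct]
      rw [h6, sq]
      exact Finset.single_le_sum (f := fun j => η t j * η t j)
        (fun j _ => mul_self_nonneg _) (Finset.mem_univ i)
    calc |η t i| = Real.sqrt ((η t i)^2) := (Real.sqrt_sq_eq_abs _).symm
    _ ≤ Real.sqrt (g t) := Real.sqrt_le_sqrt h5
  have hup : ∀ t, η t i ≤ Real.sqrt (g t) := fun t => (abs_le.mp (hbd t)).2
  have hlo : ∀ t, -Real.sqrt (g t) ≤ η t i := fun t => (abs_le.mp (hbd t)).1
  have hneg : Tendsto (fun t => -Real.sqrt (g t)) atTop (nhds 0) := by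
    simpa using hsq.neg
  exact tendsto_of_tendsto_of_tendsto_of_le_of_le hneg hsq hlo hup
end

section
/- Let N, m ≥ 1, let P ∈ ℝ^{N×N} and Γ ∈ ℝ^{m×m} be symmetric positive definite, let ω₀ > 0, c₁, c₀ ≥ 0, θ̃_b ≥ 0. Let η : [0, ∞) → ℝ^N and θ̃ : [0, ∞) → ℝ^m be differentiable with ‖θ̃(t)‖ ≤ θ̃_b for all t, and suppose V(t) := η(t)ᵀ P η(t) + θ̃(t)ᵀ Γ⁻¹ θ̃(t) is differentiable with V̇(t) ≤ −ω₀ ‖η(t)‖² + c₁ ‖η(t)‖ + c₀ for all t ≥ 0. Set λ := ω₀ / (2 λ_max(P)) and δ := (c₁²/(2ω₀) + c₀ + λ · λ_max(Γ⁻¹) · θ̃_b²) / λ, where λ_max denotes the largest eigenvalue. Then for all t ≥ 0, ‖η(t)‖ ≤ sqrt( (V(0) · exp(−λt) + δ · (1 − exp(−λt))) / λ_min(P) ), where λ_min(P) is the smallest eigenvalue of P; in particular η is bounded. -/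
open Matrix

section quad
variable {n : Type*} [Fintype n] [DecidableEq n] {A : Matrix n n ℝ}

lemma dot_eq (hA : A.IsHermitian) (x : n → ℝ) :
    x ⬝ᵥ (A *ᵥ x) = ∑ i, hA.eigenvalues i *
      (hA.eigenvectorBasis.repr ((EuclideanSpace.equiv n ℝ).symm x) i) ^ 2 := by
  classical
  set b := hA.eigenvectorBasis with hb
  set e : EuclideanSpace ℝ n := (EuclideanSpace.equiv n ℝ).symm x with he
  have hAt : Aᵀ = A := by
    have := hA; rwa [Matrix.IsHermitian, conjTranspose_eq_transpose_of_trivial] at this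
  have h1 : x ⬝ᵥ (A *ᵥ x) = (inner ℝ e ((EuclideanSpace.equiv n ℝ).symm (A *ᵥ x)) : ℝ) := by
    simp [he, PiLp.inner_apply, RCLike.inner_apply, dotProduct, mul_comm, PiLp.toLp_apply]
  have h2 : ∀ i, b.repr ((EuclideanSpace.equiv n ℝ).symm (A *ᵥ x)) i
      = hA.eigenvalues i * b.repr e i := by
    intro i
    rw [OrthonormalBasis.repr_apply_apply, OrthonormalBasis.repr_apply_apply]
    have : (inner ℝ (b i) ((EuclideanSpace.equiv n ℝ).symm (A *ᵥ x)) : ℝ)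
        = (b i : n → ℝ) ⬝ᵥ (A *ᵥ x) := by
      simp [PiLp.inner_apply, RCLike.inner_apply, dotProduct, PiLp.toLp_apply, mul_comm]
    rw [this]
    have h3 : (b i : n → ℝ) ⬝ᵥ (A *ᵥ x) = (A *ᵥ (b i : n → ℝ)) ⬝ᵥ x := by
      rw [dotProduct_mulVec, ← mulVec_transpose, hAt]
    rw [h3, show A *ᵥ (b i : n → ℝ) = hA.eigenvalues i • (b i : n → ℝ) from hA.mulVec_eigenvectorBasis i]
    have : (inner ℝ (b i) e : ℝ) = (b i : n → ℝ) ⬝ᵥ x := by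
      simp [he, PiLp.inner_apply, RCLike.inner_apply, dotProduct, PiLp.toLp_apply, mul_comm]
    rw [this]
    rw [smul_dotProduct]; simp [smul_eq_mul]
  rw [h1, ← b.repr.inner_map_map e ((EuclideanSpace.equiv n ℝ).symm (A *ᵥ x))]
  simp only [PiLp.inner_apply, RCLike.inner_apply, starRingEnd_apply, star_trivial]
  refine Finset.sum_congr rfl fun i _ => ?_
  rw [h2 i]; ring

lemma norm_eq_sum (hA : A.IsHermitian) (x : n → ℝ) :
    eucNorm x ^ 2 = ∑ i, (hA.eigenvectorBasis.repr ((EuclideanSpace.equiv n ℝ).symm x) i) ^ 2 := by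
  set b := hA.eigenvectorBasis
  set e : EuclideanSpace ℝ n := (EuclideanSpace.equiv n ℝ).symm x
  have : eucNorm x = ‖b.repr e‖ := by rw [eucNorm, b.repr.norm_map]
  rw [this]
  generalize b.repr e = y
  have hy : ‖y‖ = Real.sqrt (∑ i, ‖y i‖ ^ 2) := EuclideanSpace.norm_eq y
  rw [hy, Real.sq_sqrt (by positivity)]
  simp [Real.norm_eq_abs, sq_abs]

end quad

lemma eucNorm_nonneg {n : Type*} [Fintype n] (v : n → ℝ) : 0 ≤ eucNorm v := norm_nonneg _

section bounds
variable {n : Type*} [Fintype n] [DecidableEq n] [Nonempty n] {A : Matrix n n ℝ}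

lemma quad_le_sup (hA : A.IsHermitian) (x : n → ℝ) :
    x ⬝ᵥ (A *ᵥ x) ≤ (⨆ i, hA.eigenvalues i) * eucNorm x ^ 2 := by
  rw [dot_eq hA x, norm_eq_sum hA x, Finset.mul_sum]
  refine Finset.sum_le_sum fun i _ => ?_
  exact mul_le_mul_of_nonneg_right
    (le_ciSup (Set.Finite.bddAbove (Set.finite_range _)) i) (sq_nonneg _)

lemma inf_le_quad (hA : A.IsHermitian) (x : n → ℝ) :
    (⨅ i, hA.eigenvalues i) * eucNorm x ^ 2 ≤ x ⬝ᵥ (A *ᵥ x) := by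
  rw [dot_eq hA x, norm_eq_sum hA x, Finset.mul_sum]
  refine Finset.sum_le_sum fun i _ => ?_
  exact mul_le_mul_of_nonneg_right
    (ciInf_le (Set.Finite.bddBelow (Set.finite_range _)) i) (sq_nonneg _)

end bounds

lemma my_gronwall {V V' : ℝ → ℝ} {l d : ℝ} (hl : 0 < l)
    (hd : ∀ t ≥ (0:ℝ), HasDerivAt V (V' t) t)
    (hb : ∀ t ≥ (0:ℝ), V' t ≤ -l * V t + l * d) :
    ∀ t ≥ (0:ℝ), V t ≤ V 0 * Real.exp (-l*t) + d * (1 - Real.exp (-l*t)) := by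
  intro t ht
  set W : ℝ → ℝ := fun s => (V s - d) * Real.exp (l * s) with hWdef
  have hW : ∀ s ≥ (0:ℝ), HasDerivAt W
      (V' s * Real.exp (l*s) + (V s - d) * (Real.exp (l*s) * l)) s := by
    intro s hs
    have h1 : HasDerivAt (fun y : ℝ => Real.exp (l * y)) (Real.exp (l*s) * l) s := by
      simpa using ((hasDerivAt_id s).const_mul l).exp
    exact ((hd s hs).sub_const d).mul h1
  have anti : AntitoneOn W (Set.Ici 0) := by
    apply antitoneOn_of_deriv_nonpos (convex_Ici 0)
    · exact fun s hs => (hW s hs).continuousAt.continuousWithinAt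
    · intro s hs; rw [interior_Ici] at hs
      exact (hW s (le_of_lt hs)).differentiableAt.differentiableWithinAt
    · intro s hs; rw [interior_Ici] at hs
      rw [(hW s hs.le).deriv]
      have hbs := hb s hs.le
      nlinarith [Real.exp_pos (l*s)]
  have h0 : W t ≤ W 0 := anti Set.self_mem_Ici ht ht
  have hW0 : W 0 = V 0 - d := by simp [hWdef]
  have hepos : 0 < Real.exp (l*t) := Real.exp_pos _
  have hmul : (V t - d) * Real.exp (l*t) ≤ V 0 - d := by rw [← hW0]; exact h0
  have hexp : Real.exp (-l*t) * Real.exp (l*t) = 1 := by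
    rw [← Real.exp_add]; ring_nf; exact Real.exp_zero
  have h2 : V t - d ≤ (V 0 - d) * Real.exp (-l*t) := by
    rw [← le_div_iff₀ hepos] at hmul
    calc V t - d ≤ (V 0 - d) / Real.exp (l*t) := hmul
      _ = (V 0 - d) * Real.exp (-l*t) := by
          rw [div_eq_mul_inv, ← Real.exp_neg]; ring_nf
  nlinarith [h2]

/-- Analytic core of Theorem 2: from the Lyapunov derivative bound
`V̇ ≤ -ω₀‖η‖² + c₁‖η‖ + c₀` for `V = ηᵀPη + θ̃ᵀΓ⁻¹θ̃` with `‖θ̃‖ ≤ θ̃_b`, setting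
`λ = ω₀/(2λ_max(P))` and `δ = (c₁²/(2ω₀) + c₀ + λ·λ_max(Γ⁻¹)·θ̃_b²)/λ`, one gets the
explicit exponential ultimate bound
`‖η(t)‖ ≤ √((V(0)e^{-λt} + δ(1 - e^{-λt}))/λ_min(P))`; in particular `η` is bounded. -/
theorem stmt11 (N m : ℕ) (hN : 1 ≤ N) (hm : 1 ≤ m)
    (P : Matrix (Fin N) (Fin N) ℝ) (hP : P.PosDef) (hPsymm : Pᵀ = P)
    (Γ : Matrix (Fin m) (Fin m) ℝ) (hΓ : Γ.PosDef) (hΓsymm : Γᵀ = Γ)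
    (ω₀ c₁ c₀ θb : ℝ) (hω : 0 < ω₀) (hc₁ : 0 ≤ c₁) (hc₀ : 0 ≤ c₀) (hθb : 0 ≤ θb)
    (η : ℝ → Fin N → ℝ) (θt : ℝ → Fin m → ℝ)
    (hηd : ∀ t ≥ (0 : ℝ), DifferentiableAt ℝ η t)
    (hθd : ∀ t ≥ (0 : ℝ), DifferentiableAt ℝ θt t)
    (hθb' : ∀ t ≥ (0 : ℝ), eucNorm (θt t) ≤ θb)
    (V' : ℝ → ℝ)
    (hVd : ∀ t ≥ (0 : ℝ),
      HasDerivAt (fun s => η s ⬝ᵥ (P *ᵥ η s) + θt s ⬝ᵥ (Γ⁻¹ *ᵥ θt s)) (V' t) t)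
    (hVb : ∀ t ≥ (0 : ℝ),
      V' t ≤ -ω₀ * eucNorm (η t) ^ 2 + c₁ * eucNorm (η t) + c₀) :
    ∀ t ≥ (0 : ℝ),
      eucNorm (η t) ≤
        Real.sqrt
          (((η 0 ⬝ᵥ (P *ᵥ η 0) + θt 0 ⬝ᵥ (Γ⁻¹ *ᵥ θt 0)) *
              Real.exp (-(ω₀ / (2 * ⨆ i, hP.1.eigenvalues i)) * t) +
            ((c₁ ^ 2 / (2 * ω₀) + c₀ +
                (ω₀ / (2 * ⨆ i, hP.1.eigenvalues i)) * (⨆ i, hΓ.inv.1.eigenvalues i) *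
                  θb ^ 2) / (ω₀ / (2 * ⨆ i, hP.1.eigenvalues i))) *
              (1 - Real.exp (-(ω₀ / (2 * ⨆ i, hP.1.eigenvalues i)) * t))) /
          (⨅ i, hP.1.eigenvalues i)) := by
  haveI : Nonempty (Fin N) := ⟨⟨0, hN⟩⟩
  haveI : Nonempty (Fin m) := ⟨⟨0, hm⟩⟩
  set lM : ℝ := ⨆ i, hP.1.eigenvalues i with hlM
  set lm : ℝ := ⨅ i, hP.1.eigenvalues i with hlm
  set lG : ℝ := ⨆ i, hΓ.inv.1.eigenvalues i with hlG
  have hlMpos : 0 < lM :=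
    lt_of_lt_of_le (hP.eigenvalues_pos (Classical.arbitrary _))
      (le_ciSup (Set.Finite.bddAbove (Set.finite_range _)) _)
  have hlmpos : 0 < lm := by
    have : ∀ i, 0 < hP.1.eigenvalues i := hP.eigenvalues_pos
    obtain ⟨i0, hi0⟩ := Finite.exists_min hP.1.eigenvalues
    exact lt_of_lt_of_le (this i0) (le_ciInf hi0)
  have hlGpos : 0 < lG :=
    lt_of_lt_of_le (hΓ.inv.eigenvalues_pos (Classical.arbitrary _))
      (le_ciSup (Set.Finite.bddAbove (Set.finite_range _)) _)
  set l : ℝ := ω₀ / (2 * lM) with hl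
  have hlpos : 0 < l := by positivity
  set d : ℝ := (c₁ ^ 2 / (2 * ω₀) + c₀ + l * lG * θb ^ 2) / l with hd
  set V : ℝ → ℝ := fun s => η s ⬝ᵥ (P *ᵥ η s) + θt s ⬝ᵥ (Γ⁻¹ *ᵥ θt s) with hV
  have hld : l * d = c₁ ^ 2 / (2 * ω₀) + c₀ + l * lG * θb ^ 2 := by
    rw [hd, mul_div_cancel₀ _ hlpos.ne']
  have hllM : l * lM = ω₀ / 2 := by
    rw [hl]; field_simp
  -- derivative bound
  have hkey : ∀ t ≥ (0:ℝ), V' t ≤ -l * V t + l * d := by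
    intro t ht
    set x : ℝ := eucNorm (η t) with hx
    have hx0 : 0 ≤ x := eucNorm_nonneg _
    have hp : η t ⬝ᵥ (P *ᵥ η t) ≤ lM * x ^ 2 := quad_le_sup hP.1 (η t)
    have hg : θt t ⬝ᵥ (Γ⁻¹ *ᵥ θt t) ≤ lG * eucNorm (θt t) ^ 2 := quad_le_sup hΓ.inv.1 (θt t)
    have hg2 : lG * eucNorm (θt t) ^ 2 ≤ lG * θb ^ 2 := by
      have h1 : eucNorm (θt t) ^ 2 ≤ θb ^ 2 :=
        pow_le_pow_left₀ (eucNorm_nonneg _) (hθb' t ht) 2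
      exact mul_le_mul_of_nonneg_left h1 hlGpos.le
    have hstep : -ω₀ * x ^ 2 + c₁ * x + c₀ ≤ -(ω₀/2) * x ^ 2 + c₁ ^ 2 / (2 * ω₀) + c₀ := by
      have hexp2 : (ω₀ * x - c₁) ^ 2 / (2 * ω₀) = (ω₀/2) * x ^ 2 - c₁ * x + c₁ ^ 2 / (2 * ω₀) := by
        field_simp; ring
      have hpos2 : 0 ≤ (ω₀ * x - c₁) ^ 2 / (2 * ω₀) := by positivity
      rw [hexp2] at hpos2
      linarith
    have hPmul : l * (η t ⬝ᵥ (P *ᵥ η t)) ≤ (ω₀/2) * x ^ 2 := by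
      calc l * (η t ⬝ᵥ (P *ᵥ η t)) ≤ l * (lM * x ^ 2) :=
            mul_le_mul_of_nonneg_left hp hlpos.le
        _ = (ω₀/2) * x ^ 2 := by rw [← mul_assoc, hllM]
    have hGmul : l * (θt t ⬝ᵥ (Γ⁻¹ *ᵥ θt t)) ≤ l * (lG * θb ^ 2) :=
      mul_le_mul_of_nonneg_left (le_trans hg hg2) hlpos.le
    have hVb' := hVb t ht
    rw [hV]
    simp only []
    nlinarith [hPmul, hGmul, hstep, hVb']
  have hGron := my_gronwall hlpos hVd hkey
  intro t ht
  apply Real.le_sqrt_of_sq_le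
  rw [le_div_iff₀ hlmpos]
  have h1 : lm * eucNorm (η t) ^ 2 ≤ η t ⬝ᵥ (P *ᵥ η t) := inf_le_quad hP.1 (η t)
  have h2 : 0 ≤ θt t ⬝ᵥ (Γ⁻¹ *ᵥ θt t) := by
    have := hΓ.inv.posSemidef.dotProduct_mulVec_nonneg (θt t)
    simpa using this
  have h3 := hGron t ht
  calc eucNorm (η t) ^ 2 * lm = lm * eucNorm (η t) ^ 2 := by ring
    _ ≤ η t ⬝ᵥ (P *ᵥ η t) := h1
    _ ≤ V t := by rw [hV]; simp only []; linarith
    _ ≤ V 0 * Real.exp (-l*t) + d * (1 - Real.exp (-l*t)) := h3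
    _ = (η 0 ⬝ᵥ (P *ᵥ η 0) + θt 0 ⬝ᵥ (Γ⁻¹ *ᵥ θt 0)) * Real.exp (-l * t) +
        d * (1 - Real.exp (-l * t)) := by rw [hV]
end
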